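/- arXiv:2410.16112 — 3 statements merged into one kernel-verified Lean document; each statement's English description precedes it below -/
import Mathlib

section
/- Bias correction term for the lagged-outcome moment (Lemma 'Bias Correction Terms', first component): E[(1/T)·Σ_{t=1}^{T} Ỹ_{t-1}·ε̃_t] = −(σ_ε²/T²)·Σ_{l=0}^{T-2} Σ_{j=0}^{l} φ^j. -/
/-!
Substituting `D_t` into `Y_t` turns the model into an AR(1) recursion
`Y_t = (a + τ c) + φ Y_{t-1} + (ε_t + τ u_t)`, so
`Y_s = m_s + ∑_{j ≤ s} φ^(s-j) (ε_j + τ u_j)` with `m_s` deterministic. By independence the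
innovation `ε_j + τ u_j` is correlated with `ε_t` only for `j = t`, whence
`E[Y_s ε_t] = φ^(s-t) σ_ε²` for `t ≤ s` and `0` otherwise. In particular `Y_{t-1}` is uncorrelated
with `ε_t`, so only the cross term of the within transformation survives:
`-T⁻² ∑_s ∑_t E[Y_{s-1} ε_t] = -(σ_ε²/T²) ∑_s ∑_{j < s-1} φ^j`.
-/

open Finset MeasureTheory ProbabilityTheory

lemma sum_sub_mean_mul_sub_mean {ι : Type*} (s : Finset ι) (a b : ι → ℝ) :
    ∑ i ∈ s, (a i - (1 / (#s : ℝ)) * ∑ j ∈ s, a j) * (b i - (1 / (#s : ℝ)) * ∑ j ∈ s, b j)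
      = ∑ i ∈ s, a i * b i - (1 / (#s : ℝ)) * ∑ i ∈ s, ∑ j ∈ s, a i * b j := by
  rcases s.eq_empty_or_nonempty with rfl | hs
  · simp
  have hcard : (#s : ℝ) ≠ 0 := by exact_mod_cast hs.card_ne_zero
  simp only [sub_mul, mul_sub, sum_sub_distrib, ← mul_sum, ← sum_mul, sum_const, nsmul_eq_mul]
  field_simp
  ring

lemma sum_Icc_ite_le {M : Type*} [AddCommMonoid M] (f : ℕ → M) {n T : ℕ} (hn : n ≤ T) :
    ∑ t ∈ Icc 1 T, (if t ≤ n then f (n - t) else 0) = ∑ j ∈ range n, f j := by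
  rw [← sum_filter, show (Icc 1 T).filter (· ≤ n) = Icc 1 n by ext; simp; omega]
  exact sum_nbij' (fun t => n - t) (fun j => n - j) (by intro; simp; omega) (by intro; simp; omega)
    (by intro; simp; omega) (by intro; simp; omega) (fun _ _ => rfl)

lemma sum_Icc_sum_range_pred {M : Type*} [AddCommMonoid M] (f : ℕ → M) (T : ℕ) :
    ∑ i ∈ Icc 1 T, ∑ j ∈ range (i - 1), f j = ∑ l ∈ range (T - 1), ∑ j ∈ range (l + 1), f j := by
  rcases T with _ | T
  · simp
  rw [← Ico_add_one_right_eq_Icc, sum_Ico_eq_sum_range, Nat.add_sub_cancel, sum_range_succ']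
  simp

section AR1

variable {Ω : Type*} {Y η : ℕ → Ω → ℝ} {T : ℕ} {k φ y₀ : ℝ}

lemma exists_eq_const_add_sum_pow_mul (hY0 : ∀ ω, Y 0 ω = y₀)
    (hrec : ∀ t, 1 ≤ t → t ≤ T → ∀ ω, Y t ω = k + φ * Y (t - 1) ω + η t ω) {s : ℕ} (hs : s ≤ T) :
    ∃ m : ℝ, ∀ ω, Y s ω = m + ∑ j ∈ Icc 1 s, φ ^ (s - j) * η j ω := by
  induction s with
  | zero => exact ⟨y₀, by simp [hY0]⟩
  | succ s ih =>
    obtain ⟨m, hm⟩ := ih (by omega)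
    refine ⟨k + φ * m, fun ω => ?_⟩
    have hshift : ∑ j ∈ Icc 1 s, φ ^ (s + 1 - j) * η j ω
        = φ * ∑ j ∈ Icc 1 s, φ ^ (s - j) * η j ω := by
      rw [mul_sum]
      refine sum_congr rfl fun j hj => ?_
      rw [Nat.sub_add_comm (mem_Icc.1 hj).2, pow_succ']
      ring
    rw [hrec (s + 1) (by omega) hs, Nat.add_sub_cancel, hm, sum_Icc_succ_top (by omega), hshift,
      Nat.sub_self, pow_zero]
    ring

variable [MeasurableSpace Ω] {μ : Measure Ω}

lemma memLp_two_of_eq_ar1 [IsFiniteMeasure μ] (hY0 : ∀ ω, Y 0 ω = y₀)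
    (hrec : ∀ t, 1 ≤ t → t ≤ T → ∀ ω, Y t ω = k + φ * Y (t - 1) ω + η t ω)
    (hη : ∀ j, 1 ≤ j → j ≤ T → MemLp (η j) 2 μ) {s : ℕ} (hs : s ≤ T) : MemLp (Y s) 2 μ := by
  obtain ⟨m, hm⟩ := exists_eq_const_add_sum_pow_mul hY0 hrec hs
  rw [funext hm]
  exact (memLp_const m).add <| memLp_finsetSum _ fun j hj =>
    (hη j (mem_Icc.1 hj).1 ((mem_Icc.1 hj).2.trans hs)).const_mul _

lemma integral_mul_of_eq_ar1 [IsFiniteMeasure μ] (hY0 : ∀ ω, Y 0 ω = y₀)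
    (hrec : ∀ t, 1 ≤ t → t ≤ T → ∀ ω, Y t ω = k + φ * Y (t - 1) ω + η t ω)
    (hη : ∀ j, 1 ≤ j → j ≤ T → MemLp (η j) 2 μ) {e : Ω → ℝ} {σ : ℝ} {t : ℕ} (he : MemLp e 2 μ)
    (he0 : ∫ ω, e ω ∂μ = 0)
    (hcov : ∀ j, 1 ≤ j → j ≤ T → ∫ ω, η j ω * e ω ∂μ = if j = t then σ else 0)
    {s : ℕ} (hs : s ≤ T) (ht : 1 ≤ t) :
    ∫ ω, Y s ω * e ω ∂μ = if t ≤ s then φ ^ (s - t) * σ else 0 := by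
  obtain ⟨m, hm⟩ := exists_eq_const_add_sum_pow_mul hY0 hrec hs
  have hηe : ∀ j ∈ Icc 1 s, Integrable (fun ω => φ ^ (s - j) * (η j ω * e ω)) μ := fun j hj =>
    ((hη j (mem_Icc.1 hj).1 ((mem_Icc.1 hj).2.trans hs)).integrable_mul he).const_mul _
  simp_rw [hm, add_mul, sum_mul, mul_assoc]
  rw [integral_add ((he.integrable one_le_two).const_mul m) (integrable_finsetSum _ hηe),
    integral_const_mul, he0, mul_zero, zero_add, integral_finsetSum _ hηe,
    sum_congr rfl fun j hj => by
      rw [integral_const_mul, hcov j (mem_Icc.1 hj).1 ((mem_Icc.1 hj).2.trans hs), mul_ite,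
        mul_zero],
    sum_ite_eq']
  simp [ht]

end AR1

section Moments

variable {Ω : Type*} [MeasurableSpace Ω] {μ : Measure Ω}

lemma integral_sampleCov {ι : Type*} (s : Finset ι) (X Z : ι → Ω → ℝ)
    (h : ∀ i ∈ s, ∀ j ∈ s, Integrable (fun ω => X i ω * Z j ω) μ) :
    ∫ ω, (1 / (#s : ℝ)) * ∑ i ∈ s,
        (X i ω - (1 / (#s : ℝ)) * ∑ j ∈ s, X j ω) * (Z i ω - (1 / (#s : ℝ)) * ∑ j ∈ s, Z j ω) ∂μ
      = (1 / (#s : ℝ)) * (∑ i ∈ s, ∫ ω, X i ω * Z i ω ∂μ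
          - (1 / (#s : ℝ)) * ∑ i ∈ s, ∑ j ∈ s, ∫ ω, X i ω * Z j ω ∂μ) := by
  have hrow : ∀ i ∈ s, Integrable (fun ω => ∑ j ∈ s, X i ω * Z j ω) μ := fun i hi =>
    integrable_finsetSum _ (h i hi)
  simp_rw [sum_sub_mean_mul_sub_mean]
  rw [integral_const_mul, integral_sub (integrable_finsetSum _ fun i hi => h i hi i hi)
    ((integrable_finsetSum _ hrow).const_mul _), integral_const_mul,
    integral_finsetSum _ fun i hi => h i hi i hi, integral_finsetSum _ hrow,
    sum_congr rfl fun i hi => integral_finsetSum _ (h i hi)]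

lemma integral_add_mul_mul_eq_ite {T : ℕ} {ε u : ℕ → Ω → ℝ} {σ : ℝ} (τ : ℝ)
    (hindep : iIndepFun (Sum.elim (fun t : Fin T => ε (t + 1)) (fun t : Fin T => u (t + 1))) μ)
    (hεL2 : ∀ t, 1 ≤ t → t ≤ T → MemLp (ε t) 2 μ) (huL2 : ∀ t, 1 ≤ t → t ≤ T → MemLp (u t) 2 μ)
    (hεmean : ∀ t, 1 ≤ t → t ≤ T → ∫ ω, ε t ω ∂μ = 0)
    (hεvar : ∀ t, 1 ≤ t → t ≤ T → ∫ ω, ε t ω ^ 2 ∂μ = σ)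
    {j t : ℕ} (hj1 : 1 ≤ j) (hjT : j ≤ T) (ht1 : 1 ≤ t) (htT : t ≤ T) :
    ∫ ω, (ε j ω + τ * u j ω) * ε t ω ∂μ = if j = t then σ else 0 := by
  let jε : Fin T ⊕ Fin T := .inl ⟨j - 1, by omega⟩
  let ju : Fin T ⊕ Fin T := .inr ⟨j - 1, by omega⟩
  let tε : Fin T ⊕ Fin T := .inl ⟨t - 1, by omega⟩
  have huε : ∫ ω, u j ω * ε t ω ∂μ = 0 := by
    have h := hindep.indepFun (show ju ≠ tε from Sum.inr_ne_inl)
    simp only [Sum.elim_inl, Sum.elim_inr, ju, tε, Nat.sub_add_cancel hj1,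
      Nat.sub_add_cancel ht1] at h
    rw [h.integral_fun_mul_eq_mul_integral (huL2 j hj1 hjT).1 (hεL2 t ht1 htT).1,
      hεmean t ht1 htT, mul_zero]
  have hεε : ∫ ω, ε j ω * ε t ω ∂μ = if j = t then σ else 0 := by
    split_ifs with hjt
    · subst hjt
      simp_rw [← sq]
      exact hεvar j hj1 hjT
    have h := hindep.indepFun (show jε ≠ tε by simp [jε, tε]; omega)
    simp only [Sum.elim_inl, jε, tε, Nat.sub_add_cancel hj1, Nat.sub_add_cancel ht1] at h
    rw [h.integral_fun_mul_eq_mul_integral (hεL2 j hj1 hjT).1 (hεL2 t ht1 htT).1,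
      hεmean t ht1 htT, mul_zero]
  have hεεint : Integrable (fun ω => ε j ω * ε t ω) μ :=
    (hεL2 j hj1 hjT).integrable_mul (hεL2 t ht1 htT)
  have huεint : Integrable (fun ω => u j ω * ε t ω) μ :=
    (huL2 j hj1 hjT).integrable_mul (hεL2 t ht1 htT)
  simp_rw [add_mul, mul_assoc]
  rw [integral_add hεεint (huεint.const_mul τ), integral_const_mul, huε, hεε, mul_zero, add_zero]

end Moments

theorem bias_correction_term_rho1_general {Ω : Type*} [MeasurableSpace Ω]
    (μ : Measure Ω) [IsProbabilityMeasure μ] (T : ℕ)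
    (ρ₁ τ ρ₂ φ a c Y₀ σε2 : ℝ) (hφ : φ = ρ₁ + τ * ρ₂)
    (ε u : ℕ → Ω → ℝ)
    (hεL2 : ∀ t : ℕ, 1 ≤ t → t ≤ T → MemLp (ε t) 2 μ)
    (huL2 : ∀ t : ℕ, 1 ≤ t → t ≤ T → MemLp (u t) 2 μ)
    (hindep : iIndepFun
      (Sum.elim (fun t : Fin T => ε (t + 1)) (fun t : Fin T => u (t + 1))) μ)
    (hεmean : ∀ t : ℕ, 1 ≤ t → t ≤ T → ∫ ω, ε t ω ∂μ = 0)
    (hεvar : ∀ t : ℕ, 1 ≤ t → t ≤ T → ∫ ω, (ε t ω) ^ 2 ∂μ = σε2)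
    (Y D : ℕ → Ω → ℝ) (hY0 : ∀ ω, Y 0 ω = Y₀)
    (hD : ∀ t : ℕ, 1 ≤ t → t ≤ T → ∀ ω, D t ω = c + ρ₂ * Y (t - 1) ω + u t ω)
    (hY : ∀ t : ℕ, 1 ≤ t → t ≤ T → ∀ ω,
      Y t ω = a + ρ₁ * Y (t - 1) ω + τ * D t ω + ε t ω) :
    ∫ ω, (1 / (T : ℝ)) * ∑ t ∈ Icc 1 T,
        (Y (t - 1) ω - (1 / (T : ℝ)) * ∑ s ∈ Icc 1 T, Y (s - 1) ω)
          * (ε t ω - (1 / (T : ℝ)) * ∑ s ∈ Icc 1 T, ε s ω) ∂μ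
      = -(σε2 / (T : ℝ) ^ 2) * ∑ l ∈ range (T - 1), ∑ j ∈ range (l + 1), φ ^ j := by
  have hrec : ∀ t, 1 ≤ t → t ≤ T → ∀ ω,
      Y t ω = (a + τ * c) + φ * Y (t - 1) ω + (ε t ω + τ * u t ω) := fun t ht1 htT ω => by
    rw [hY t ht1 htT, hD t ht1 htT, hφ]
    ring
  have hηL2 : ∀ j, 1 ≤ j → j ≤ T → MemLp (fun ω => ε j ω + τ * u j ω) 2 μ := fun j hj1 hjT =>
    (hεL2 j hj1 hjT).add ((huL2 j hj1 hjT).const_mul τ)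
  have hYε : ∀ s t, s ≤ T → 1 ≤ t → t ≤ T →
      ∫ ω, Y s ω * ε t ω ∂μ = if t ≤ s then φ ^ (s - t) * σε2 else 0 := fun s t hs ht1 htT =>
    integral_mul_of_eq_ar1 hY0 hrec hηL2 (hεL2 t ht1 htT) (hεmean t ht1 htT)
      (fun j hj1 hjT => integral_add_mul_mul_eq_ite τ hindep hεL2 huL2 hεmean hεvar hj1 hjT ht1 htT)
      hs ht1
  have hint : ∀ i ∈ Icc 1 T, ∀ j ∈ Icc 1 T, Integrable (fun ω => Y (i - 1) ω * ε j ω) μ :=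
    fun i hi j hj => (memLp_two_of_eq_ar1 hY0 hrec hηL2 (s := i - 1) (by grind)).integrable_mul
      (hεL2 j (mem_Icc.1 hj).1 (mem_Icc.1 hj).2)
  have hdiag : ∀ t ∈ Icc 1 T, ∫ ω, Y (t - 1) ω * ε t ω ∂μ = 0 := fun t ht => by
    rw [hYε (t - 1) t (by grind) (by grind) (by grind), if_neg (by grind)]
  have hrow : ∀ i ∈ Icc 1 T, ∑ j ∈ Icc 1 T, ∫ ω, Y (i - 1) ω * ε j ω ∂μ
      = (∑ l ∈ range (i - 1), φ ^ l) * σε2 := fun i hi => by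
    rw [sum_congr rfl fun j hj => hYε (i - 1) j (by grind) (by grind) (by grind),
      sum_Icc_ite_le (fun l => φ ^ l * σε2) (by grind), sum_mul]
  have hcov := integral_sampleCov (Icc 1 T) (fun t => Y (t - 1)) ε hint
  simp only [Nat.card_Icc, Nat.add_sub_cancel] at hcov
  rw [hcov, sum_eq_zero hdiag, sum_congr rfl hrow, ← sum_mul, sum_Icc_sum_range_pred]
  ring

/-- Bias correction term for the lagged-outcome moment (first component of the Lemma
"Bias Correction Terms"):
`E[(1/T)·Σ_{t=1}^{T} Ỹ_{t-1}·ε̃_t] = −(σ_ε²/T²)·Σ_{l=0}^{T-2} Σ_{j=0}^{l} φ^j`. -/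
theorem bias_correction_term_rho1 {Ω : Type*} [MeasurableSpace Ω]
    (μ : Measure Ω) [IsProbabilityMeasure μ] (T : ℕ) (hT : 2 ≤ T)
    (ρ₁ τ ρ₂ φ a c Y₀ σε2 σu2 : ℝ) (hφ : φ = ρ₁ + τ * ρ₂)
    (ε u : ℕ → Ω → ℝ)
    (hεmeas : ∀ t, Measurable (ε t)) (humeas : ∀ t, Measurable (u t))
    (hεL2 : ∀ t : ℕ, 1 ≤ t → t ≤ T → MemLp (ε t) 2 μ)
    (huL2 : ∀ t : ℕ, 1 ≤ t → t ≤ T → MemLp (u t) 2 μ)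
    (hindep : iIndepFun
      (Sum.elim (fun t : Fin T => ε (t + 1)) (fun t : Fin T => u (t + 1))) μ)
    (hεmean : ∀ t : ℕ, 1 ≤ t → t ≤ T → ∫ ω, ε t ω ∂μ = 0)
    (humean : ∀ t : ℕ, 1 ≤ t → t ≤ T → ∫ ω, u t ω ∂μ = 0)
    (hεvar : ∀ t : ℕ, 1 ≤ t → t ≤ T → ∫ ω, (ε t ω) ^ 2 ∂μ = σε2)
    (huvar : ∀ t : ℕ, 1 ≤ t → t ≤ T → ∫ ω, (u t ω) ^ 2 ∂μ = σu2)
    (Y D : ℕ → Ω → ℝ) (hY0 : ∀ ω, Y 0 ω = Y₀)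
    (hD : ∀ t : ℕ, 1 ≤ t → t ≤ T → ∀ ω, D t ω = c + ρ₂ * Y (t - 1) ω + u t ω)
    (hY : ∀ t : ℕ, 1 ≤ t → t ≤ T → ∀ ω,
      Y t ω = a + ρ₁ * Y (t - 1) ω + τ * D t ω + ε t ω) :
    ∫ ω, (1 / (T : ℝ)) * ∑ t ∈ Icc 1 T,
        (Y (t - 1) ω - (1 / (T : ℝ)) * ∑ s ∈ Icc 1 T, Y (s - 1) ω)
          * (ε t ω - (1 / (T : ℝ)) * ∑ s ∈ Icc 1 T, ε s ω) ∂μ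
      = -(σε2 / (T : ℝ) ^ 2) * ∑ l ∈ range (T - 1), ∑ j ∈ range (l + 1), φ ^ j :=
  bias_correction_term_rho1_general μ T ρ₁ τ ρ₂ φ a c Y₀ σε2 hφ ε u hεL2 huL2 hindep hεmean hεvar Y
    D hY0 hD hY
end

section
/- Zero mean of the de-biased (DBC) moment at the true parameter: E[(1/T)·Σ_{t=1}^{T} Ỹ_{t-1}·ε̃_t + Φ_T(φ)·σ̂_ε²] = 0, where Φ_T(φ) = (1/T²)·Σ_{l=0}^{T-2} Σ_{j=0}^{l} φ^j and σ̂_ε² = (1/(T-1))·Σ_{t=1}^{T} ε̃_t² is the within-transformed variance estimator evaluated at the true errors. -/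
open Finset MeasureTheory ProbabilityTheory

/-!
Substituting `D_t` gives the reduced form `Y_t = (a + τ c) + φ Y_{t-1} + (ε_t + τ u_t)`, so
`Y_t` is a constant plus `Σ_{j<t} φ^j (ε_{t-j} + τ u_{t-j})` and, by independence,
`E[Y_t ε_s] = φ^{t-s} σ_ε²` for `s ≤ t` and `0` for `s > t`. Expanding the within transformation,
`E[Σ_t Ỹ_{t-1} ε̃_t] = -(1/T) Σ_t E[Y_{t-1} Σ_s ε_s] = -(σ_ε²/T) Σ_{l<T-1} Σ_{j≤l} φ^j`
(the Nickell bias), while `E[Σ_t ε̃_t²] = (T-1) σ_ε²`, so `Φ_T(φ) σ̂_ε²` has exactly the opposite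
mean.
-/

theorem sum_Icc_pred_eq_sum_range_succ {M : Type*} [AddCommMonoid M] {f : ℕ → M} (hf : f 0 = 0)
    (n : ℕ) : ∑ t ∈ Icc 1 n, f (t - 1) = ∑ l ∈ range (n - 1), f (l + 1) := by
  rw [← Ico_add_one_right_eq_Icc, sum_Ico_eq_sum_range]
  cases n with
  | zero => simp
  | succ n => simp [sum_range_succ', hf]

section Centered

variable {ι : Type*}

theorem sum_centered_mul_centered (s : Finset ι) (x z : ι → ℝ) {n : ℝ} (hn : (#s : ℝ) = n) :
    ∑ i ∈ s, (x i - 1 / n * ∑ j ∈ s, x j) * (z i - 1 / n * ∑ j ∈ s, z j)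
      = ∑ i ∈ s, x i * z i - 1 / n * ∑ i ∈ s, x i * ∑ j ∈ s, z j := by
  rcases eq_or_ne n 0 with rfl | hn0
  · simp
  · simp only [sub_mul, mul_sub, sum_sub_distrib, ← mul_sum, ← sum_mul, sum_const, nsmul_eq_mul, hn]
    field_simp
    ring

variable {Ω : Type*} [MeasurableSpace Ω] {μ : Measure Ω}

theorem integrable_sum_centered_mul_centered (s : Finset ι) {X Z : ι → Ω → ℝ}
    (hX : ∀ i ∈ s, MemLp (X i) 2 μ) (hZ : ∀ i ∈ s, MemLp (Z i) 2 μ) (c d : ℝ) :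
    Integrable (fun ω => ∑ i ∈ s, (X i ω - c * ∑ j ∈ s, X j ω) * (Z i ω - d * ∑ j ∈ s, Z j ω)) μ :=
  integrable_finsetSum _ fun i hi =>
    ((hX i hi).sub ((memLp_finsetSum s hX).const_mul c)).integrable_mul
      ((hZ i hi).sub ((memLp_finsetSum s hZ).const_mul d))

theorem integral_sum_centered_mul_centered (s : Finset ι) {X Z : ι → Ω → ℝ}
    (hX : ∀ i ∈ s, MemLp (X i) 2 μ) (hZ : ∀ i ∈ s, MemLp (Z i) 2 μ) {n : ℝ} (hn : (#s : ℝ) = n) :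
    ∫ ω, ∑ i ∈ s, (X i ω - 1 / n * ∑ j ∈ s, X j ω) * (Z i ω - 1 / n * ∑ j ∈ s, Z j ω) ∂μ
      = ∑ i ∈ s, ∫ ω, X i ω * Z i ω ∂μ - 1 / n * ∑ i ∈ s, ∫ ω, X i ω * ∑ j ∈ s, Z j ω ∂μ := by
  have hXZ : ∀ i ∈ s, Integrable (fun ω => X i ω * Z i ω) μ := fun i hi =>
    (hX i hi).integrable_mul (hZ i hi)
  have hXsumZ : ∀ i ∈ s, Integrable (fun ω => X i ω * ∑ j ∈ s, Z j ω) μ := fun i hi =>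
    (hX i hi).integrable_mul (memLp_finsetSum s hZ)
  simp only [sum_centered_mul_centered s _ _ hn]
  rw [integral_sub (integrable_finsetSum s hXZ) ((integrable_finsetSum s hXsumZ).const_mul _),
    integral_const_mul, integral_finsetSum s hXZ, integral_finsetSum s hXsumZ]

theorem integral_mul_sum (s : Finset ι) {f : Ω → ℝ} {g : ι → Ω → ℝ} (hf : MemLp f 2 μ)
    (hg : ∀ i ∈ s, MemLp (g i) 2 μ) :
    ∫ ω, f ω * ∑ i ∈ s, g i ω ∂μ = ∑ i ∈ s, ∫ ω, f ω * g i ω ∂μ := by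
  have hfg : ∀ i ∈ s, Integrable (fun ω => f ω * g i ω) μ := fun i hi => hf.integrable_mul (hg i hi)
  simp only [mul_sum]
  exact integral_finsetSum s hfg

theorem integral_sum_centered_sq [DecidableEq ι] {σ2 : ℝ} (s : Finset ι) {e : ι → Ω → ℝ}
    (he : ∀ i ∈ s, MemLp (e i) 2 μ)
    (hcov : ∀ i ∈ s, ∀ j ∈ s, ∫ ω, e i ω * e j ω ∂μ = if i = j then σ2 else 0)
    {n : ℝ} (hn : (#s : ℝ) = n) (hn0 : n ≠ 0) :
    ∫ ω, ∑ i ∈ s, (e i ω - 1 / n * ∑ j ∈ s, e j ω) ^ 2 ∂μ = (n - 1) * σ2 := by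
  have hvar : ∀ i ∈ s, ∫ ω, e i ω * e i ω ∂μ = σ2 := fun i hi => by rw [hcov i hi i hi, if_pos rfl]
  have hsum : ∀ i ∈ s, ∫ ω, e i ω * ∑ j ∈ s, e j ω ∂μ = σ2 := fun i hi => by
    rw [integral_mul_sum s (he i hi) he, sum_congr rfl (hcov i hi), sum_ite_eq, if_pos hi]
  simp only [sq]
  rw [integral_sum_centered_mul_centered s he he hn, sum_congr rfl hvar, sum_congr rfl hsum,
    sum_const, nsmul_eq_mul, hn]
  field_simp

end Centered

section Recursion

variable {Ω : Type*} [MeasurableSpace Ω] {μ : Measure Ω} [IsFiniteMeasure μ]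
  {X V : ℕ → Ω → ℝ} {N : ℕ} {x₀ κ φ : ℝ}

theorem memLp_of_recursion (hX0 : ∀ ω, X 0 ω = x₀)
    (hX : ∀ t < N, ∀ ω, X (t + 1) ω = κ + φ * X t ω + V (t + 1) ω)
    (hV : ∀ t < N, MemLp (V (t + 1)) 2 μ) : ∀ t ≤ N, MemLp (X t) 2 μ := by
  intro t
  induction t with
  | zero => exact fun _ => (funext hX0 : X 0 = fun _ => x₀) ▸ memLp_const x₀
  | succ t ih =>
    intro ht
    rw [show X (t + 1) = fun ω => κ + φ * X t ω + V (t + 1) ω from funext (hX t ht)]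
    exact ((memLp_const κ).add ((ih (Nat.le_of_succ_le ht)).const_mul φ)).add (hV t ht)

theorem integral_mul_of_recursion (hX0 : ∀ ω, X 0 ω = x₀)
    (hX : ∀ t < N, ∀ ω, X (t + 1) ω = κ + φ * X t ω + V (t + 1) ω)
    (hV : ∀ t < N, MemLp (V (t + 1)) 2 μ) {e : Ω → ℝ} (he : MemLp e 2 μ) (he0 : ∫ ω, e ω ∂μ = 0) :
    ∀ t ≤ N, ∫ ω, X t ω * e ω ∂μ = ∑ j ∈ range t, φ ^ j * ∫ ω, V (t - j) ω * e ω ∂μ := by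
  intro t
  induction t with
  | zero => intro _; simp [hX0, integral_const_mul, he0]
  | succ t ih =>
    intro ht
    have hXt : Integrable (fun ω => X t ω * e ω) μ :=
      (memLp_of_recursion hX0 hX hV t (Nat.le_of_succ_le ht)).integrable_mul he
    have hVt : Integrable (fun ω => V (t + 1) ω * e ω) μ := (hV t ht).integrable_mul he
    have hκe : Integrable (fun ω => κ * e ω) μ := (he.integrable one_le_two).const_mul κ
    have hdet : Integrable (fun ω => κ * e ω + φ * (X t ω * e ω)) μ := hκe.add (hXt.const_mul φ)
    have hexpand : ∀ ω, X (t + 1) ω * e ω = κ * e ω + φ * (X t ω * e ω) + V (t + 1) ω * e ω :=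
      fun ω => by rw [hX t ht ω]; ring
    simp only [hexpand]
    rw [integral_add hdet hVt, integral_add hκe (hXt.const_mul φ),
      integral_const_mul, integral_const_mul, he0, ih (Nat.le_of_succ_le ht), sum_range_succ',
      mul_sum]
    simp only [Nat.add_sub_add_right, pow_succ, Nat.sub_zero, pow_zero]
    ring

theorem integral_sum_centered_lag_mul_centered {Y V e : ℕ → Ω → ℝ} {T : ℕ} {σ2 : ℝ}
    (hY0 : ∀ ω, Y 0 ω = x₀)
    (hY : ∀ t < T, ∀ ω, Y (t + 1) ω = κ + φ * Y t ω + V (t + 1) ω)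
    (hV : ∀ t ∈ Icc 1 T, MemLp (V t) 2 μ) (he : ∀ t ∈ Icc 1 T, MemLp (e t) 2 μ)
    (he0 : ∀ t ∈ Icc 1 T, ∫ ω, e t ω ∂μ = 0)
    (hVe : ∀ s ∈ Icc 1 T, ∀ t ∈ Icc 1 T, ∫ ω, V s ω * e t ω ∂μ = if s = t then σ2 else 0) :
    ∫ ω, ∑ t ∈ Icc 1 T, (Y (t - 1) ω - 1 / (T : ℝ) * ∑ s ∈ Icc 1 T, Y (s - 1) ω)
        * (e t ω - 1 / (T : ℝ) * ∑ s ∈ Icc 1 T, e s ω) ∂μ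
      = -(1 / (T : ℝ) * σ2 * ∑ l ∈ range (T - 1), ∑ j ∈ range (l + 1), φ ^ j) := by
  have hV' : ∀ t < T, MemLp (V (t + 1)) 2 μ := fun t ht => hV (t + 1) (by grind)
  have hYL2 : ∀ t ∈ Icc 1 T, MemLp (Y (t - 1)) 2 μ := fun t ht =>
    memLp_of_recursion hY0 hY hV' (t - 1) (by grind)
  have hlag : ∀ t ∈ Icc 1 T, ∫ ω, Y (t - 1) ω * e t ω ∂μ = 0 := fun t ht => by
    rw [integral_mul_of_recursion hY0 hY hV' (he t ht) (he0 t ht) (t - 1) (by grind)]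
    exact sum_eq_zero fun j hj => by rw [hVe _ (by grind) t ht, if_neg (by grind), mul_zero]
  have hsum : ∀ t ∈ Icc 1 T,
      ∫ ω, Y (t - 1) ω * ∑ s ∈ Icc 1 T, e s ω ∂μ = σ2 * ∑ j ∈ range (t - 1), φ ^ j := by
    intro t ht
    have hsum0 : ∫ ω, ∑ s ∈ Icc 1 T, e s ω ∂μ = 0 := by
      rw [integral_finsetSum _ fun s hs => (he s hs).integrable one_le_two, sum_eq_zero he0]
    rw [integral_mul_of_recursion hY0 hY hV' (memLp_finsetSum _ he) hsum0 (t - 1) (by grind),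
      mul_sum]
    refine sum_congr rfl fun j hj => ?_
    rw [integral_mul_sum _ (hV _ (by grind)) he, sum_congr rfl (hVe _ (by grind)), sum_ite_eq,
      if_pos (by grind), mul_comm]
  rw [integral_sum_centered_mul_centered _ hYL2 he (by simp), sum_eq_zero hlag,
    sum_congr rfl hsum, sum_Icc_pred_eq_sum_range_succ (f := fun l => σ2 * ∑ j ∈ range l, φ ^ j)
      (by simp), ← mul_sum]
  ring

end Recursion

section Shocks

variable {Ω : Type*} [MeasurableSpace Ω] {μ : Measure Ω} {T : ℕ} {ε u : ℕ → Ω → ℝ} {s t : ℕ}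

theorem exists_fin_succ_eq_of_mem_Icc (ht : t ∈ Icc 1 T) : ∃ i : Fin T, (i : ℕ) + 1 = t :=
  ⟨⟨t - 1, by grind⟩, by grind⟩

theorem indepFun_eps_eps_of_ne
    (hindep : iIndepFun (Sum.elim (fun t : Fin T => ε (t + 1)) (fun t : Fin T => u (t + 1))) μ)
    (hs : s ∈ Icc 1 T) (ht : t ∈ Icc 1 T) (hst : s ≠ t) : IndepFun (ε s) (ε t) μ := by
  obtain ⟨i, rfl⟩ := exists_fin_succ_eq_of_mem_Icc hs
  obtain ⟨j, rfl⟩ := exists_fin_succ_eq_of_mem_Icc ht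
  simpa using hindep.indepFun (i := .inl i) (j := .inl j) (by grind)

theorem indepFun_u_eps
    (hindep : iIndepFun (Sum.elim (fun t : Fin T => ε (t + 1)) (fun t : Fin T => u (t + 1))) μ)
    (hs : s ∈ Icc 1 T) (ht : t ∈ Icc 1 T) : IndepFun (u s) (ε t) μ := by
  obtain ⟨i, rfl⟩ := exists_fin_succ_eq_of_mem_Icc hs
  obtain ⟨j, rfl⟩ := exists_fin_succ_eq_of_mem_Icc ht
  simpa using hindep.indepFun (i := .inr i) (j := .inl j) Sum.inr_ne_inl

variable {σ2 τ : ℝ}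

theorem integral_eps_mul_eps (hεL2 : ∀ t ∈ Icc 1 T, MemLp (ε t) 2 μ)
    (hindep : iIndepFun (Sum.elim (fun t : Fin T => ε (t + 1)) (fun t : Fin T => u (t + 1))) μ)
    (hεmean : ∀ t ∈ Icc 1 T, ∫ ω, ε t ω ∂μ = 0)
    (hεvar : ∀ t ∈ Icc 1 T, ∫ ω, ε t ω ^ 2 ∂μ = σ2) (hs : s ∈ Icc 1 T) (ht : t ∈ Icc 1 T) :
    ∫ ω, ε s ω * ε t ω ∂μ = if s = t then σ2 else 0 := by
  split_ifs with hst
  · subst hst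
    simpa [sq] using hεvar s hs
  · rw [← Pi.mul_def, (indepFun_eps_eps_of_ne hindep hs ht hst).integral_mul_eq_mul_integral
      (hεL2 s hs).aestronglyMeasurable (hεL2 t ht).aestronglyMeasurable, hεmean t ht, mul_zero]

theorem integral_u_mul_eps (hεL2 : ∀ t ∈ Icc 1 T, MemLp (ε t) 2 μ)
    (huL2 : ∀ t ∈ Icc 1 T, MemLp (u t) 2 μ)
    (hindep : iIndepFun (Sum.elim (fun t : Fin T => ε (t + 1)) (fun t : Fin T => u (t + 1))) μ)
    (hεmean : ∀ t ∈ Icc 1 T, ∫ ω, ε t ω ∂μ = 0) (hs : s ∈ Icc 1 T) (ht : t ∈ Icc 1 T) :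
    ∫ ω, u s ω * ε t ω ∂μ = 0 := by
  rw [← Pi.mul_def, (indepFun_u_eps hindep hs ht).integral_mul_eq_mul_integral
    (huL2 s hs).aestronglyMeasurable (hεL2 t ht).aestronglyMeasurable, hεmean t ht, mul_zero]

theorem integral_shock_mul_eps (hεL2 : ∀ t ∈ Icc 1 T, MemLp (ε t) 2 μ)
    (huL2 : ∀ t ∈ Icc 1 T, MemLp (u t) 2 μ)
    (hindep : iIndepFun (Sum.elim (fun t : Fin T => ε (t + 1)) (fun t : Fin T => u (t + 1))) μ)
    (hεmean : ∀ t ∈ Icc 1 T, ∫ ω, ε t ω ∂μ = 0)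
    (hεvar : ∀ t ∈ Icc 1 T, ∫ ω, ε t ω ^ 2 ∂μ = σ2) (hs : s ∈ Icc 1 T) (ht : t ∈ Icc 1 T) :
    ∫ ω, (ε s ω + τ * u s ω) * ε t ω ∂μ = if s = t then σ2 else 0 := by
  have hεε : Integrable (fun ω => ε s ω * ε t ω) μ := (hεL2 s hs).integrable_mul (hεL2 t ht)
  have huε : Integrable (fun ω => u s ω * ε t ω) μ := (huL2 s hs).integrable_mul (hεL2 t ht)
  simp only [add_mul, mul_assoc]
  rw [integral_add hεε (huε.const_mul τ), integral_const_mul,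
    integral_eps_mul_eps hεL2 hindep hεmean hεvar hs ht,
    integral_u_mul_eps hεL2 huL2 hindep hεmean hs ht, mul_zero, add_zero]

end Shocks

theorem dbc_moment_mean_zero_general {Ω : Type*} [MeasurableSpace Ω]
    (μ : Measure Ω) [IsProbabilityMeasure μ] (T : ℕ) (hT : 2 ≤ T)
    (ρ₁ τ ρ₂ φ a c Y₀ σε2 : ℝ) (hφ : φ = ρ₁ + τ * ρ₂)
    (ε u : ℕ → Ω → ℝ)
    (hεL2 : ∀ t : ℕ, 1 ≤ t → t ≤ T → MemLp (ε t) 2 μ)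
    (huL2 : ∀ t : ℕ, 1 ≤ t → t ≤ T → MemLp (u t) 2 μ)
    (hindep : iIndepFun
      (Sum.elim (fun t : Fin T => ε (t + 1)) (fun t : Fin T => u (t + 1))) μ)
    (hεmean : ∀ t : ℕ, 1 ≤ t → t ≤ T → ∫ ω, ε t ω ∂μ = 0)
    (hεvar : ∀ t : ℕ, 1 ≤ t → t ≤ T → ∫ ω, (ε t ω) ^ 2 ∂μ = σε2)
    (Y D : ℕ → Ω → ℝ) (hY0 : ∀ ω, Y 0 ω = Y₀)
    (hD : ∀ t : ℕ, 1 ≤ t → t ≤ T → ∀ ω, D t ω = c + ρ₂ * Y (t - 1) ω + u t ω)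
    (hY : ∀ t : ℕ, 1 ≤ t → t ≤ T → ∀ ω,
      Y t ω = a + ρ₁ * Y (t - 1) ω + τ * D t ω + ε t ω):
    ∫ ω, ((1 / (T : ℝ)) * ∑ t ∈ Icc 1 T,
        (Y (t - 1) ω - (1 / (T : ℝ)) * ∑ s ∈ Icc 1 T, Y (s - 1) ω)
          * (ε t ω - (1 / (T : ℝ)) * ∑ s ∈ Icc 1 T, ε s ω)
      + ((1 / (T : ℝ) ^ 2) * ∑ l ∈ range (T - 1), ∑ j ∈ range (l + 1), φ ^ j)
          * ((1 / ((T : ℝ) - 1)) * ∑ t ∈ Icc 1 T,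
              (ε t ω - (1 / (T : ℝ)) * ∑ s ∈ Icc 1 T, ε s ω) ^ 2)) ∂μ = 0 := by
  have icc {P : ℕ → Prop} (h : ∀ t, 1 ≤ t → t ≤ T → P t) : ∀ t ∈ Icc 1 T, P t :=
    fun t ht => h t (mem_Icc.1 ht).1 (mem_Icc.1 ht).2
  replace hεL2 := icc hεL2
  replace huL2 := icc huL2
  replace hεmean := icc hεmean
  replace hεvar := icc hεvar
  have hT0 : (T : ℝ) ≠ 0 := by positivity
  have hT1 : (T : ℝ) - 1 ≠ 0 := by
    have : (2 : ℝ) ≤ T := by exact_mod_cast hT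
    linarith
  have hrec : ∀ t < T, ∀ ω,
      Y (t + 1) ω = (a + τ * c) + φ * Y t ω + (ε (t + 1) ω + τ * u (t + 1) ω) := by
    intro t ht ω
    rw [hY (t + 1) (by omega) ht ω, hD (t + 1) (by omega) ht ω, Nat.add_sub_cancel, hφ]
    ring
  have hVL2 : ∀ t ∈ Icc 1 T, MemLp (fun ω => ε t ω + τ * u t ω) 2 μ := fun t ht =>
    (hεL2 t ht).add ((huL2 t ht).const_mul τ)
  have hYL2 : ∀ t ∈ Icc 1 T, MemLp (Y (t - 1)) 2 μ := fun t ht =>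
    memLp_of_recursion (V := fun t ω => ε t ω + τ * u t ω) hY0 hrec
      (fun t ht => hVL2 (t + 1) (by grind)) (t - 1) (by grind)
  have hsq : Integrable
      (fun ω => ∑ t ∈ Icc 1 T, (ε t ω - 1 / (T : ℝ) * ∑ s ∈ Icc 1 T, ε s ω) ^ 2) μ := by
    simpa only [sq] using integrable_sum_centered_mul_centered _ hεL2 hεL2 _ _
  rw [integral_add ((integrable_sum_centered_mul_centered _ hYL2 hεL2 _ _).const_mul _)
      ((hsq.const_mul _).const_mul _),
    integral_const_mul, integral_const_mul, integral_const_mul,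
    integral_sum_centered_lag_mul_centered hY0 hrec hVL2 hεL2 hεmean
      fun s hs t ht => integral_shock_mul_eps hεL2 huL2 hindep hεmean hεvar hs ht,
    integral_sum_centered_sq _ hεL2
      (fun s hs t ht => integral_eps_mul_eps hεL2 hindep hεmean hεvar hs ht) (by simp) hT0]
  field_simp
  ring

/-- Zero mean of the de-biased (DBC) moment at the true parameter:
`E[(1/T)·Σ_{t=1}^{T} Ỹ_{t-1}·ε̃_t + Φ_T(φ)·σ̂_ε²] = 0`, where
`Φ_T(φ) = (1/T²)·Σ_{l=0}^{T-2} Σ_{j=0}^{l} φ^j` and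
`σ̂_ε² = (1/(T-1))·Σ_{t=1}^{T} ε̃_t²` is the within-transformed variance estimator evaluated at
the true errors. -/
theorem dbc_moment_mean_zero {Ω : Type*} [MeasurableSpace Ω]
    (μ : Measure Ω) [IsProbabilityMeasure μ] (T : ℕ) (hT : 2 ≤ T)
    (ρ₁ τ ρ₂ φ a c Y₀ σε2 σu2 : ℝ) (hφ : φ = ρ₁ + τ * ρ₂)
    (ε u : ℕ → Ω → ℝ)
    (hεmeas : ∀ t, Measurable (ε t)) (humeas : ∀ t, Measurable (u t))
    (hεL2 : ∀ t : ℕ, 1 ≤ t → t ≤ T → MemLp (ε t) 2 μ)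
    (huL2 : ∀ t : ℕ, 1 ≤ t → t ≤ T → MemLp (u t) 2 μ)
    (hindep : iIndepFun
      (Sum.elim (fun t : Fin T => ε (t + 1)) (fun t : Fin T => u (t + 1))) μ)
    (hεmean : ∀ t : ℕ, 1 ≤ t → t ≤ T → ∫ ω, ε t ω ∂μ = 0)
    (humean : ∀ t : ℕ, 1 ≤ t → t ≤ T → ∫ ω, u t ω ∂μ = 0)
    (hεvar : ∀ t : ℕ, 1 ≤ t → t ≤ T → ∫ ω, (ε t ω) ^ 2 ∂μ = σε2)
    (huvar : ∀ t : ℕ, 1 ≤ t → t ≤ T → ∫ ω, (u t ω) ^ 2 ∂μ = σu2)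
    (Y D : ℕ → Ω → ℝ) (hY0 : ∀ ω, Y 0 ω = Y₀)
    (hD : ∀ t : ℕ, 1 ≤ t → t ≤ T → ∀ ω, D t ω = c + ρ₂ * Y (t - 1) ω + u t ω)
    (hY : ∀ t : ℕ, 1 ≤ t → t ≤ T → ∀ ω,
      Y t ω = a + ρ₁ * Y (t - 1) ω + τ * D t ω + ε t ω):
    ∫ ω, ((1 / (T : ℝ)) * ∑ t ∈ Icc 1 T,
        (Y (t - 1) ω - (1 / (T : ℝ)) * ∑ s ∈ Icc 1 T, Y (s - 1) ω)
          * (ε t ω - (1 / (T : ℝ)) * ∑ s ∈ Icc 1 T, ε s ω)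
      + ((1 / (T : ℝ) ^ 2) * ∑ l ∈ range (T - 1), ∑ j ∈ range (l + 1), φ ^ j)
          * ((1 / ((T : ℝ) - 1)) * ∑ t ∈ Icc 1 T,
              (ε t ω - (1 / (T : ℝ)) * ∑ s ∈ Icc 1 T, ε s ω) ^ 2)) ∂μ = 0 :=
  dbc_moment_mean_zero_general μ T hT ρ₁ τ ρ₂ φ a c Y₀ σε2 hφ ε u hεL2 huL2 hindep hεmean hεvar Y D
    hY0 hD hY
end

section
/- Dynamic bias of the static fixed-effects estimator (Theorem 'Dynamic Bias'): the population least-squares coefficient of the within-transformed static regression satisfies (Σ_{t=1}^{T} Cov(D̃_t, Y_t)) / (Σ_{t=1}^{T} Var(D̃_t)) = τ₀ − (ρ₁₀·τ₀/(T·(T-1)))·Σ_{t=1}^{T} Σ_{s=1}^{t-1} ρ₁₀^{t-s-1}, which is the probability limit of the OLS treatment-effect estimator in the static model omitting the lagged outcome. -/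
/-!
Demeaning removes `c`, so `D̃ₜ = uₜ - ū`, and unrolling the AR(1) recursion writes `Yₜ` as a
constant plus `∑_{s ≤ t} ρ^{t-s} (τ uₛ + εₛ)`. As the `uₛ` are uncorrelated with common variance
`σ²` and uncorrelated with the `εₛ`, `Cov(uₜ - ū, uₛ) = σ² (δₜₛ - 1/T)` and
`Cov(uₜ - ū, εₛ) = 0`. Hence `Var D̃ₜ = σ² (1 - 1/T)` while
`Cov(D̃ₜ, Yₜ) = τ σ² (1 - T⁻¹ ∑_{s ≤ t} ρ^{t-s})`: the lagged innovations `s < t` reach `D̃ₜ`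
through `ū`, and they are the source of the bias.
-/

open Finset MeasureTheory ProbabilityTheory

noncomputable def cov {Ω : Type*} [MeasurableSpace Ω] (μ : Measure Ω)
    (X Z : Ω → ℝ) : ℝ :=
  ∫ ω, (X ω - ∫ x, X x ∂μ) * (Z ω - ∫ x, Z x ∂μ) ∂μ

noncomputable def var {Ω : Type*} [MeasurableSpace Ω] (μ : Measure Ω)
    (X : Ω → ℝ) : ℝ :=
  cov μ X X

lemma cov_eq_covariance {Ω : Type*} [MeasurableSpace Ω] (μ : Measure Ω) (X Z : Ω → ℝ) :
    cov μ X Z = cov[X, Z; μ] := rfl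

lemma var_eq_covariance {Ω : Type*} [MeasurableSpace Ω] (μ : Measure Ω) (X : Ω → ℝ) :
    var μ X = cov[X, X; μ] := rfl

lemma const_add_sub_mul_sum_const_add {ι : Type*} (S : Finset ι) (x : ι → ℝ) (t : ι)
    {c w : ℝ} (hw : w * #S = 1) :
    c + x t - w * ∑ s ∈ S, (c + x s) = x t - w * ∑ s ∈ S, x s := by
  rw [Finset.sum_add_distrib, Finset.sum_const, nsmul_eq_mul]
  linear_combination (-c) * hw

section WithinTransformation

variable {Ω ι : Type*} [MeasurableSpace Ω] {μ : Measure Ω} [IsFiniteMeasure μ]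
  {X : ι → Ω → ℝ} {S : Finset ι} {t : ι}

lemma covariance_sub_mul_sum_left (hX : ∀ s ∈ S, MemLp (X s) 2 μ) (ht : t ∈ S)
    {Z : Ω → ℝ} (hZ : MemLp Z 2 μ) (w : ℝ) :
    cov[fun ω ↦ X t ω - w * ∑ s ∈ S, X s ω, Z; μ]
      = cov[X t, Z; μ] - w * ∑ s ∈ S, cov[X s, Z; μ] := by
  rw [covariance_fun_sub_left (hX t ht) ((memLp_finsetSum S hX).const_mul w) hZ,
    covariance_const_mul_left, covariance_fun_sum_left' hX hZ]

variable [DecidableEq ι] {σ2 : ℝ}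

lemma covariance_sub_mul_sum_left_of_orthogonal (hX : ∀ s ∈ S, MemLp (X s) 2 μ)
    (hXX : ∀ s ∈ S, ∀ r ∈ S, cov[X s, X r; μ] = if s = r then σ2 else 0)
    (ht : t ∈ S) {r : ι} (hr : r ∈ S) (w : ℝ) :
    cov[fun ω ↦ X t ω - w * ∑ s ∈ S, X s ω, X r; μ] = (if t = r then σ2 else 0) - w * σ2 := by
  rw [covariance_sub_mul_sum_left hX ht (hX r hr), hXX t ht r hr,
    Finset.sum_congr rfl fun s hs ↦ hXX s hs r hr, Finset.sum_ite_eq' S r, if_pos hr]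

lemma covariance_sub_mul_sum_self_of_orthogonal (hX : ∀ s ∈ S, MemLp (X s) 2 μ)
    (hXX : ∀ s ∈ S, ∀ r ∈ S, cov[X s, X r; μ] = if s = r then σ2 else 0)
    (ht : t ∈ S) (w : ℝ) :
    cov[fun ω ↦ X t ω - w * ∑ s ∈ S, X s ω, fun ω ↦ X t ω - w * ∑ s ∈ S, X s ω; μ]
      = σ2 * (1 - 2 * w + #S * w ^ 2) := by
  have hXt : MemLp (fun ω ↦ X t ω - w * ∑ s ∈ S, X s ω) 2 μ :=
    (hX t ht).sub ((memLp_finsetSum S hX).const_mul w)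
  rw [covariance_fun_sub_right hXt (hX t ht) ((memLp_finsetSum S hX).const_mul w),
    covariance_const_mul_right, covariance_fun_sum_right' hX hXt,
    Finset.sum_congr rfl fun r hr ↦ covariance_sub_mul_sum_left_of_orthogonal hX hXX ht hr w,
    covariance_sub_mul_sum_left_of_orthogonal hX hXX ht ht w, Finset.sum_sub_distrib,
    Finset.sum_ite_eq S t, if_pos ht, if_pos rfl, Finset.sum_const, nsmul_eq_mul]
  ring

end WithinTransformation

lemma covariance_self_eq_integral_sq {Ω : Type*} [MeasurableSpace Ω] {μ : Measure Ω}
    [IsProbabilityMeasure μ] {X : Ω → ℝ} (hX : MemLp X 2 μ) (hmean : μ[X] = 0) :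
    cov[X, X; μ] = ∫ ω, X ω ^ 2 ∂μ := by
  rw [covariance_eq_sub hX hX, hmean, mul_zero, sub_zero]
  simp only [Pi.mul_apply, sq]

lemma sum_Icc_pow_mul_succ {M : Type*} [CommRing M] (ρ : M) (η : ℕ → M) (t : ℕ) :
    ∑ s ∈ Icc 1 (t + 1), ρ ^ (t + 1 - s) * η s
      = ρ * ∑ s ∈ Icc 1 t, ρ ^ (t - s) * η s + η (t + 1) := by
  rw [Finset.sum_Icc_succ_top (by omega), Nat.sub_self, pow_zero, one_mul, Finset.mul_sum]
  congr 1
  refine Finset.sum_congr rfl fun s hs ↦ ?_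
  rw [show t + 1 - s = t - s + 1 by grind, pow_succ]
  ring

lemma sum_Icc_pow_sub {M : Type*} [CommRing M] (ρ : M) {t : ℕ} (ht : 1 ≤ t) :
    ∑ s ∈ Icc 1 t, ρ ^ (t - s) = 1 + ρ * ∑ s ∈ Icc 1 (t - 1), ρ ^ (t - s - 1) := by
  obtain ⟨k, rfl⟩ := Nat.exists_eq_add_of_le' ht
  have h := sum_Icc_pow_mul_succ ρ (fun _ ↦ (1 : M)) k
  simp only [mul_one] at h
  rw [h, add_comm, Nat.add_sub_cancel]
  simp only [Nat.sub_right_comm _ _ 1, Nat.add_sub_cancel]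

lemma exists_eq_const_add_sum_pow_mul_of_ar1 {Ω : Type*} {Y η : ℕ → Ω → ℝ} {α ρ y₀ : ℝ} {T : ℕ}
    (h0 : ∀ ω, Y 0 ω = y₀)
    (hrec : ∀ t < T, ∀ ω, Y (t + 1) ω = α + ρ * Y t ω + η (t + 1) ω) :
    ∀ t ≤ T, ∃ A : ℝ, ∀ ω, Y t ω = A + ∑ s ∈ Icc 1 t, ρ ^ (t - s) * η s ω := by
  intro t
  induction t with
  | zero => exact fun _ ↦ ⟨y₀, fun ω ↦ by simp [h0 ω]⟩
  | succ t ih =>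
    intro ht
    obtain ⟨A, hA⟩ := ih (by omega)
    refine ⟨α + ρ * A, fun ω ↦ ?_⟩
    rw [hrec t ht ω, hA ω, sum_Icc_pow_mul_succ ρ (η · ω) t]
    ring

lemma covariance_sub_mul_sum_moving_average {Ω : Type*} [MeasurableSpace Ω] {μ : Measure Ω}
    [IsFiniteMeasure μ] {u ε : ℕ → Ω → ℝ} {S : Finset ℕ} {t : ℕ} {σ2 : ℝ}
    (hu : ∀ s ∈ S, MemLp (u s) 2 μ) (hε : ∀ s ∈ S, MemLp (ε s) 2 μ)
    (huu : ∀ s ∈ S, ∀ r ∈ S, cov[u s, u r; μ] = if s = r then σ2 else 0)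
    (huε : ∀ s ∈ S, ∀ r ∈ S, cov[u s, ε r; μ] = 0)
    (ht : 1 ≤ t) (htS : Icc 1 t ⊆ S) (τ ρ w : ℝ) :
    cov[fun ω ↦ u t ω - w * ∑ s ∈ S, u s ω,
        fun ω ↦ ∑ s ∈ Icc 1 t, ρ ^ (t - s) * (τ * u s ω + ε s ω); μ]
      = τ * σ2 * (1 - w * ∑ s ∈ Icc 1 t, ρ ^ (t - s)) := by
  have htt : t ∈ Icc 1 t := right_mem_Icc.2 ht
  have hU : MemLp (fun ω ↦ u t ω - w * ∑ s ∈ S, u s ω) 2 μ :=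
    (hu t (htS htt)).sub ((memLp_finsetSum S hu).const_mul w)
  have hη : ∀ s ∈ S, MemLp (fun ω ↦ τ * u s ω + ε s ω) 2 μ :=
    fun s hs ↦ ((hu s hs).const_mul τ).add (hε s hs)
  have hUε : ∀ r ∈ S, cov[fun ω ↦ u t ω - w * ∑ s ∈ S, u s ω, ε r; μ] = 0 := fun r hr ↦ by
    rw [covariance_sub_mul_sum_left hu (htS htt) (hε r hr),
      Finset.sum_eq_zero fun s hs ↦ huε s hs r hr, huε t (htS htt) r hr, mul_zero, sub_zero]
  rw [covariance_fun_sum_right' (fun s hs ↦ (hη s (htS hs)).const_mul _) hU]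
  calc ∑ s ∈ Icc 1 t, cov[fun ω ↦ u t ω - w * ∑ s ∈ S, u s ω,
          fun ω ↦ ρ ^ (t - s) * (τ * u s ω + ε s ω); μ]
      = ∑ s ∈ Icc 1 t, ρ ^ (t - s) * (τ * ((if t = s then σ2 else 0) - w * σ2)) := by
        refine Finset.sum_congr rfl fun s hs ↦ ?_
        rw [covariance_const_mul_right,
          show (fun ω ↦ τ * u s ω + ε s ω) = (fun ω ↦ τ * u s ω) + ε s from rfl,
          covariance_add_right hU ((hu s (htS hs)).const_mul τ) (hε s (htS hs)),
          covariance_const_mul_right, hUε s (htS hs),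
          covariance_sub_mul_sum_left_of_orthogonal hu huu (htS htt) (htS hs), add_zero]
    _ = τ * σ2 * (1 - w * ∑ s ∈ Icc 1 t, ρ ^ (t - s)) := by
        simp only [mul_sub, mul_ite, mul_zero, Finset.sum_sub_distrib, Finset.sum_ite_eq,
          if_pos htt, Nat.sub_self, pow_zero, one_mul, ← Finset.sum_mul]
        ring

lemma covariance_sub_mul_sum_of_ar1 {Ω : Type*} [MeasurableSpace Ω] {μ : Measure Ω}
    [IsProbabilityMeasure μ] {u ε Y : ℕ → Ω → ℝ} {S : Finset ℕ} {t : ℕ} {σ2 α τ ρ y₀ : ℝ}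
    (hu : ∀ s ∈ S, MemLp (u s) 2 μ) (hε : ∀ s ∈ S, MemLp (ε s) 2 μ)
    (huu : ∀ s ∈ S, ∀ r ∈ S, cov[u s, u r; μ] = if s = r then σ2 else 0)
    (huε : ∀ s ∈ S, ∀ r ∈ S, cov[u s, ε r; μ] = 0)
    (h0 : ∀ ω, Y 0 ω = y₀)
    (hrec : ∀ k < t, ∀ ω, Y (k + 1) ω = α + ρ * Y k ω + (τ * u (k + 1) ω + ε (k + 1) ω))
    (ht : 1 ≤ t) (htS : Icc 1 t ⊆ S) (w : ℝ) :
    cov[fun ω ↦ u t ω - w * ∑ s ∈ S, u s ω, Y t; μ]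
      = τ * σ2 * (1 - w * ∑ s ∈ Icc 1 t, ρ ^ (t - s)) := by
  obtain ⟨A, hA⟩ := exists_eq_const_add_sum_pow_mul_of_ar1
    (η := fun s ω ↦ τ * u s ω + ε s ω) h0 hrec t le_rfl
  have hMA : MemLp (fun ω ↦ ∑ s ∈ Icc 1 t, ρ ^ (t - s) * (τ * u s ω + ε s ω)) 2 μ :=
    memLp_finsetSum _ fun s hs ↦
      (((hu s (htS hs)).const_mul τ).add (hε s (htS hs))).const_mul _
  rw [funext hA, covariance_const_add_right (hMA.integrable one_le_two),
    covariance_sub_mul_sum_moving_average hu hε huu huε ht htS]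

section Innovations

variable {Ω : Type*} [MeasurableSpace Ω] {μ : Measure Ω} {T : ℕ} {ε u : ℕ → Ω → ℝ}

lemma exists_fin_add_one_eq {t : ℕ} (ht : t ∈ Icc 1 T) : ∃ i : Fin T, (i : ℕ) + 1 = t :=
  ⟨⟨t - 1, by grind⟩, by grind⟩

lemma covariance_eq_ite_of_iIndepFun_sumElim [IsProbabilityMeasure μ] {σ2 : ℝ}
    (hindep : iIndepFun (Sum.elim (fun t : Fin T ↦ ε (t + 1)) (fun t : Fin T ↦ u (t + 1))) μ)
    (hu : ∀ s ∈ Icc 1 T, MemLp (u s) 2 μ) (humean : ∀ s ∈ Icc 1 T, μ[u s] = 0)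
    (huvar : ∀ s ∈ Icc 1 T, ∫ ω, u s ω ^ 2 ∂μ = σ2) :
    ∀ s ∈ Icc 1 T, ∀ r ∈ Icc 1 T, cov[u s, u r; μ] = if s = r then σ2 else 0 := by
  intro s hs r hr
  split_ifs with hsr
  · rw [← hsr, covariance_self_eq_integral_sq (hu s hs) (humean s hs), huvar s hs]
  · obtain ⟨i, rfl⟩ := exists_fin_add_one_eq hs
    obtain ⟨j, rfl⟩ := exists_fin_add_one_eq hr
    exact (hindep.indepFun (i := .inr i) (j := .inr j) (by grind)).covariance_eq_zero
      (hu _ hs) (hu _ hr)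

lemma covariance_eq_zero_of_iIndepFun_sumElim
    (hindep : iIndepFun (Sum.elim (fun t : Fin T ↦ ε (t + 1)) (fun t : Fin T ↦ u (t + 1))) μ)
    (hu : ∀ s ∈ Icc 1 T, MemLp (u s) 2 μ) (hε : ∀ s ∈ Icc 1 T, MemLp (ε s) 2 μ) :
    ∀ s ∈ Icc 1 T, ∀ r ∈ Icc 1 T, cov[u s, ε r; μ] = 0 := by
  intro s hs r hr
  obtain ⟨i, rfl⟩ := exists_fin_add_one_eq hs
  obtain ⟨j, rfl⟩ := exists_fin_add_one_eq hr
  exact (hindep.indepFun (i := .inr i) (j := .inl j) (by simp)).covariance_eq_zero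
    (hu _ hs) (hε _ hr)

end Innovations

theorem dynamic_bias_general {Ω : Type*} [MeasurableSpace Ω]
    (μ : Measure Ω) [IsProbabilityMeasure μ] (T : ℕ) (hT : 2 ≤ T)
    (τ₀ ρ₁₀ a c Y₀ σ2 : ℝ) (hσ2 : 0 < σ2)
    (ε u : ℕ → Ω → ℝ)
    (hεL2 : ∀ t : ℕ, 1 ≤ t → t ≤ T → MemLp (ε t) 2 μ)
    (huL2 : ∀ t : ℕ, 1 ≤ t → t ≤ T → MemLp (u t) 2 μ)
    (hindep : iIndepFun
      (Sum.elim (fun t : Fin T => ε (t + 1)) (fun t : Fin T => u (t + 1))) μ)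
    (humean : ∀ t : ℕ, 1 ≤ t → t ≤ T → ∫ ω, u t ω ∂μ = 0)
    (huvar : ∀ t : ℕ, 1 ≤ t → t ≤ T → ∫ ω, (u t ω) ^ 2 ∂μ = σ2)
    (Y D : ℕ → Ω → ℝ) (hY0 : ∀ ω, Y 0 ω = Y₀)
    (hD : ∀ t : ℕ, 1 ≤ t → t ≤ T → ∀ ω, D t ω = c + u t ω)
    (hY : ∀ t : ℕ, 1 ≤ t → t ≤ T → ∀ ω,
      Y t ω = a + τ₀ * D t ω + ρ₁₀ * Y (t - 1) ω + ε t ω) :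
    (∑ t ∈ Icc 1 T,
        cov μ (fun ω => D t ω - (1 / (T : ℝ)) * ∑ s ∈ Icc 1 T, D s ω) (Y t))
      / (∑ t ∈ Icc 1 T,
          var μ (fun ω => D t ω - (1 / (T : ℝ)) * ∑ s ∈ Icc 1 T, D s ω))
    = τ₀ - (ρ₁₀ * τ₀ / ((T : ℝ) * ((T : ℝ) - 1)))
        * ∑ t ∈ Icc 1 T, ∑ s ∈ Icc 1 (t - 1), ρ₁₀ ^ (t - s - 1) := by
  have hT2 : (2 : ℝ) ≤ T := by exact_mod_cast hT
  have hT0 : (T : ℝ) ≠ 0 := ne_of_gt (by linarith)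
  have hT1 : (T : ℝ) - 1 ≠ 0 := ne_of_gt (by linarith)
  have hcard : (#(Icc 1 T) : ℝ) = T := by simp
  have hmean_weight : 1 / (T : ℝ) * #(Icc 1 T) = 1 := by rw [hcard]; field_simp
  have hu (s) (hs : s ∈ Icc 1 T) := huL2 s (mem_Icc.1 hs).1 (mem_Icc.1 hs).2
  have hε (s) (hs : s ∈ Icc 1 T) := hεL2 s (mem_Icc.1 hs).1 (mem_Icc.1 hs).2
  have huu := covariance_eq_ite_of_iIndepFun_sumElim hindep hu
    (fun s hs ↦ humean s (mem_Icc.1 hs).1 (mem_Icc.1 hs).2)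
    (fun s hs ↦ huvar s (mem_Icc.1 hs).1 (mem_Icc.1 hs).2)
  have huε := covariance_eq_zero_of_iIndepFun_sumElim hindep hu hε
  have hwithin : ∀ t ∈ Icc 1 T, (fun ω ↦ D t ω - (1 / (T : ℝ)) * ∑ s ∈ Icc 1 T, D s ω)
      = fun ω ↦ u t ω - (1 / (T : ℝ)) * ∑ s ∈ Icc 1 T, u s ω := fun t ht ↦ funext fun ω ↦ by
    rw [hD t (mem_Icc.1 ht).1 (mem_Icc.1 ht).2 ω,
      Finset.sum_congr rfl fun s hs ↦ hD s (mem_Icc.1 hs).1 (mem_Icc.1 hs).2 ω]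
    exact const_add_sub_mul_sum_const_add _ (u · ω) t hmean_weight
  have hrec (k) (hk : k < T) (ω) :
      Y (k + 1) ω = (a + τ₀ * c) + ρ₁₀ * Y k ω + (τ₀ * u (k + 1) ω + ε (k + 1) ω) := by
    rw [hY (k + 1) (by omega) hk ω, hD (k + 1) (by omega) hk ω, Nat.add_sub_cancel]
    ring
  have hcov : ∀ t ∈ Icc 1 T,
      cov μ (fun ω ↦ D t ω - (1 / (T : ℝ)) * ∑ s ∈ Icc 1 T, D s ω) (Y t)
        = τ₀ * σ2 * (1 - 1 / T * (1 + ρ₁₀ * ∑ s ∈ Icc 1 (t - 1), ρ₁₀ ^ (t - s - 1))) := by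
    intro t ht
    obtain ⟨ht1, htT⟩ := mem_Icc.1 ht
    rw [cov_eq_covariance, hwithin t ht, covariance_sub_mul_sum_of_ar1 hu hε huu huε hY0
      (fun k hk ↦ hrec k (by omega)) ht1 (Icc_subset_Icc_right htT), sum_Icc_pow_sub ρ₁₀ ht1]
  have hvar : ∀ t ∈ Icc 1 T,
      var μ (fun ω ↦ D t ω - (1 / (T : ℝ)) * ∑ s ∈ Icc 1 T, D s ω) = σ2 * (1 - 1 / T) := by
    intro t ht
    rw [var_eq_covariance, hwithin t ht,
      covariance_sub_mul_sum_self_of_orthogonal hu huu ht, hcard]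
    field_simp
    ring
  rw [Finset.sum_congr rfl hcov, Finset.sum_congr rfl hvar]
  simp only [mul_sub, mul_add, mul_one, Finset.sum_sub_distrib, Finset.sum_add_distrib,
    Finset.sum_const, nsmul_eq_mul, hcard, ← Finset.mul_sum]
  field_simp
  ring

/-- Dynamic bias of the static fixed-effects estimator (Theorem "Dynamic Bias"): the population
least-squares coefficient of the within-transformed static regression satisfies
`(Σ_{t=1}^{T} Cov(D̃_t, Y_t)) / (Σ_{t=1}^{T} Var(D̃_t))`
`= τ₀ − (ρ₁₀·τ₀/(T·(T-1)))·Σ_{t=1}^{T} Σ_{s=1}^{t-1} ρ₁₀^{t-s-1}`,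
the probability limit of the OLS treatment-effect estimator in the static model omitting the
lagged outcome. -/
theorem dynamic_bias {Ω : Type*} [MeasurableSpace Ω]
    (μ : Measure Ω) [IsProbabilityMeasure μ] (T : ℕ) (hT : 2 ≤ T)
    (τ₀ ρ₁₀ a c Y₀ σ2 : ℝ) (hσ2 : 0 < σ2)
    (ε u : ℕ → Ω → ℝ)
    (hεmeas : ∀ t, Measurable (ε t)) (humeas : ∀ t, Measurable (u t))
    (hεL2 : ∀ t : ℕ, 1 ≤ t → t ≤ T → MemLp (ε t) 2 μ)
    (huL2 : ∀ t : ℕ, 1 ≤ t → t ≤ T → MemLp (u t) 2 μ)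
    (hindep : iIndepFun
      (Sum.elim (fun t : Fin T => ε (t + 1)) (fun t : Fin T => u (t + 1))) μ)
    (hεmean : ∀ t : ℕ, 1 ≤ t → t ≤ T → ∫ ω, ε t ω ∂μ = 0)
    (humean : ∀ t : ℕ, 1 ≤ t → t ≤ T → ∫ ω, u t ω ∂μ = 0)
    (huvar : ∀ t : ℕ, 1 ≤ t → t ≤ T → ∫ ω, (u t ω) ^ 2 ∂μ = σ2)
    (Y D : ℕ → Ω → ℝ) (hY0 : ∀ ω, Y 0 ω = Y₀)
    (hD : ∀ t : ℕ, 1 ≤ t → t ≤ T → ∀ ω, D t ω = c + u t ω)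
    (hY : ∀ t : ℕ, 1 ≤ t → t ≤ T → ∀ ω,
      Y t ω = a + τ₀ * D t ω + ρ₁₀ * Y (t - 1) ω + ε t ω) :
    (∑ t ∈ Icc 1 T,
        cov μ (fun ω => D t ω - (1 / (T : ℝ)) * ∑ s ∈ Icc 1 T, D s ω) (Y t))
      / (∑ t ∈ Icc 1 T,
          var μ (fun ω => D t ω - (1 / (T : ℝ)) * ∑ s ∈ Icc 1 T, D s ω))
    = τ₀ - (ρ₁₀ * τ₀ / ((T : ℝ) * ((T : ℝ) - 1)))
        * ∑ t ∈ Icc 1 T, ∑ s ∈ Icc 1 (t - 1), ρ₁₀ ^ (t - s - 1) :=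
  dynamic_bias_general μ T hT τ₀ ρ₁₀ a c Y₀ σ2 hσ2 ε u hεL2 huL2 hindep humean huvar Y D hY0 hD hY
end
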